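/- arXiv:1004.2170 — 6 statements merged into one kernel-verified Lean document; each statement's English description precedes it below -/
import Mathlib

section
/- For every n ≥ 2, every coordinate index i with 1 ≤ i ≤ n, and every triple of pairwise distinct points x₁, x₂, x₃ ∈ ℝⁿ, one has p_i(x₁,x₂,x₃) ≥ 0. -/
/-- The symmetrization quantity `p_i(x₁,x₂,x₃)`: the sum, over the three choices of a
"vertex" among the three points, of the product of the `i`-th components of the scalar
Riesz kernels of homogeneity `-1` evaluated at the two differences from the vertex. -/
noncomputable def rieszSym {n : ℕ} (i : Fin n) (x₁ x₂ x₃ : EuclideanSpace ℝ (Fin n)) : ℝ :=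
    ((x₂ - x₁) i / ‖x₂ - x₁‖ ^ 2) * ((x₃ - x₁) i / ‖x₃ - x₁‖ ^ 2) +
    ((x₁ - x₂) i / ‖x₁ - x₂‖ ^ 2) * ((x₃ - x₂) i / ‖x₃ - x₂‖ ^ 2) +
    ((x₁ - x₃) i / ‖x₁ - x₃‖ ^ 2) * ((x₂ - x₃) i / ‖x₂ - x₃‖ ^ 2)

/-!
Put `a = x₂ - x₁`, `b = x₃ - x₁`, `u = aᵢ` and `v = bᵢ`. Over the common denominator
`‖a‖² ‖b‖² ‖b - a‖²` the three terms of `p_i` have numerator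
`u v ‖b - a‖² - u (v - u) ‖b‖² + v (v - u) ‖a‖²`, and expanding `‖b - a‖²` shows that this is
exactly `‖u • b - v • a‖²`.
-/

section InnerProductSpace

variable {E : Type*} [NormedAddCommGroup E] [InnerProductSpace ℝ E]

theorem norm_smul_sub_smul_sq (a b : E) (u v : ℝ) :
    ‖u • b - v • a‖ ^ 2 = u * v * ‖b - a‖ ^ 2 - u * (v - u) * ‖b‖ ^ 2 + v * (v - u) * ‖a‖ ^ 2 := by
  rw [norm_sub_sq_real, norm_sub_sq_real, norm_smul, norm_smul, real_inner_smul_left,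
    real_inner_smul_right, Real.norm_eq_abs, Real.norm_eq_abs, mul_pow, mul_pow, sq_abs, sq_abs]
  ring

theorem riesz_triangle_sum_eq_norm_sq_div (a b : E) (ha : a ≠ 0) (hb : b ≠ 0) (hab : b - a ≠ 0)
    (u v : ℝ) :
    u / ‖a‖ ^ 2 * (v / ‖b‖ ^ 2) + -u / ‖a‖ ^ 2 * ((v - u) / ‖b - a‖ ^ 2) +
        -v / ‖b‖ ^ 2 * (-(v - u) / ‖b - a‖ ^ 2) =
      ‖u • b - v • a‖ ^ 2 / (‖a‖ ^ 2 * ‖b‖ ^ 2 * ‖b - a‖ ^ 2) := by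
  rw [norm_smul_sub_smul_sq]
  have := norm_ne_zero_iff.2 ha
  have := norm_ne_zero_iff.2 hb
  have := norm_ne_zero_iff.2 hab
  field_simp
  ring

end InnerProductSpace

theorem rieszSym_eq_norm_sq_div {n : ℕ} (i : Fin n) {x₁ x₂ x₃ : EuclideanSpace ℝ (Fin n)}
    (h₁₂ : x₁ ≠ x₂) (h₁₃ : x₁ ≠ x₃) (h₂₃ : x₂ ≠ x₃) :
    rieszSym i x₁ x₂ x₃ =
      ‖(x₂ - x₁) i • (x₃ - x₁) - (x₃ - x₁) i • (x₂ - x₁)‖ ^ 2 /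
        (‖x₂ - x₁‖ ^ 2 * ‖x₃ - x₁‖ ^ 2 * ‖x₃ - x₂‖ ^ 2) := by
  have h₃₂ : x₃ - x₂ = (x₃ - x₁) - (x₂ - x₁) := (sub_sub_sub_cancel_right _ _ _).symm
  rw [h₃₂, ← riesz_triangle_sum_eq_norm_sq_div _ _ (sub_ne_zero.2 h₁₂.symm)
    (sub_ne_zero.2 h₁₃.symm) (h₃₂ ▸ sub_ne_zero.2 h₂₃.symm), rieszSym,
    ← neg_sub x₂ x₁, ← neg_sub x₃ x₁, ← neg_sub x₃ x₂, h₃₂]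
  simp only [PiLp.neg_apply, PiLp.sub_apply, norm_neg]

theorem rieszSym_nonneg_general (n : ℕ) (i : Fin n)
    (x₁ x₂ x₃ : EuclideanSpace ℝ (Fin n))
    (h₁₂ : x₁ ≠ x₂) (h₁₃ : x₁ ≠ x₃) (h₂₃ : x₂ ≠ x₃) :
    0 ≤ rieszSym i x₁ x₂ x₃ := by
  rw [rieszSym_eq_norm_sq_div i h₁₂ h₁₃ h₂₃]
  positivity

/-- For every `n ≥ 2`, every coordinate `i`, and pairwise distinct points
`x₁, x₂, x₃ ∈ ℝⁿ`, one has `p_i(x₁,x₂,x₃) ≥ 0`. -/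
theorem rieszSym_nonneg (n : ℕ) (hn : 2 ≤ n) (i : Fin n)
    (x₁ x₂ x₃ : EuclideanSpace ℝ (Fin n))
    (h₁₂ : x₁ ≠ x₂) (h₁₃ : x₁ ≠ x₃) (h₂₃ : x₂ ≠ x₃) :
    0 ≤ rieszSym i x₁ x₂ x₃ :=
  rieszSym_nonneg_general n i x₁ x₂ x₃ h₁₂ h₁₃ h₂₃
end

section
/- Let x₁, x₂, x₃ ∈ ℝⁿ be pairwise distinct. If x₁, x₂, x₃ lie on a common line, then p_i(x₁,x₂,x₃) = 0 for every i with 1 ≤ i ≤ n. -/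
/-!
Parametrize the line as `x_k = t_k • v + p`. Then every quotient
`(x_a - x_v)_i / |x_a - x_v|²` equals `(v_i / |v|²) / (t_a - t_v)`, so `p_i` is `(v_i / |v|²)²`
times `Σ_k 1 / ∏_{j ≠ k} (t_j - t_k)`. This sum vanishes for distinct `t_k`: it is the sum of the
residues of `1 / ((z - t₁)(z - t₂)(z - t₃))`, which decays like `z⁻³`.
-/

theorem inv_mul_sub_add_inv_mul_sub_add_inv_mul_sub_eq_zero {K : Type*} [Field K] {a b c : K}
    (hab : a ≠ b) (hac : a ≠ c) (hbc : b ≠ c) :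
    ((b - a) * (c - a))⁻¹ + ((a - b) * (c - b))⁻¹ + ((a - c) * (b - c))⁻¹ = 0 := by
  field_simp [sub_ne_zero.2 hab, sub_ne_zero.2 hac, sub_ne_zero.2 hbc, sub_ne_zero.2 hab.symm,
    sub_ne_zero.2 hac.symm, sub_ne_zero.2 hbc.symm]
  ring

theorem EuclideanSpace.smul_apply_div_norm_sq {ι : Type*} [Fintype ι] (s : ℝ)
    (v : EuclideanSpace ℝ ι) (i : ι) :
    (s • v) i / ‖s • v‖ ^ 2 = s⁻¹ * (v i / ‖v‖ ^ 2) := by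
  rw [PiLp.smul_apply, smul_eq_mul, norm_smul, mul_pow, Real.norm_eq_abs, sq_abs, mul_div_mul_comm,
    sq s, div_self_mul_self']

theorem rieszSym_smul_vadd {n : ℕ} (i : Fin n) (v p : EuclideanSpace ℝ (Fin n)) (t₁ t₂ t₃ : ℝ) :
    rieszSym i (t₁ • v +ᵥ p) (t₂ • v +ᵥ p) (t₃ • v +ᵥ p) =
      (v i / ‖v‖ ^ 2) ^ 2 * (((t₂ - t₁) * (t₃ - t₁))⁻¹ + ((t₁ - t₂) * (t₃ - t₂))⁻¹ +
        ((t₁ - t₃) * (t₂ - t₃))⁻¹) := by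
  simp only [rieszSym, vadd_eq_add, add_sub_add_right_eq_sub, ← sub_smul,
    EuclideanSpace.smul_apply_div_norm_sq, mul_inv]
  ring

/-- If the pairwise distinct points `x₁, x₂, x₃ ∈ ℝⁿ` lie on a common line, then
`p_i(x₁,x₂,x₃) = 0` for every coordinate index `i`. -/
theorem rieszSym_eq_zero_of_collinear (n : ℕ) (x₁ x₂ x₃ : EuclideanSpace ℝ (Fin n))
    (h₁₂ : x₁ ≠ x₂) (h₁₃ : x₁ ≠ x₃) (h₂₃ : x₂ ≠ x₃)
    (hcol : Collinear ℝ ({x₁, x₂, x₃} : Set (EuclideanSpace ℝ (Fin n)))) :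
    ∀ i : Fin n, rieszSym i x₁ x₂ x₃ = 0 := by
  intro i
  obtain ⟨p, v, hv⟩ := (collinear_iff_exists_forall_eq_smul_vadd _).mp hcol
  obtain ⟨t₁, rfl⟩ := hv x₁ (by simp)
  obtain ⟨t₂, rfl⟩ := hv x₂ (by simp)
  obtain ⟨t₃, rfl⟩ := hv x₃ (by simp)
  rw [rieszSym_smul_vadd, inv_mul_sub_add_inv_mul_sub_add_inv_mul_sub_eq_zero, mul_zero] <;>
    rintro rfl <;> contradiction
end

section
/- Let x₁, x₂, x₃ ∈ ℝ² be pairwise distinct. Then p₁(x₁,x₂,x₃) = p₂(x₁,x₂,x₃) = (1/4)·c(x₁,x₂,x₃)², where c(x₁,x₂,x₃) = 4A / (|x₁−x₂|·|x₁−x₃|·|x₂−x₃|) is the Menger curvature and A = (1/2)·|det(x₂−x₁, x₃−x₁)| is the area of the triangle with vertices x₁, x₂, x₃. In particular p₁ and p₂ are non-negative and vanish if and only if x₁, x₂, x₃ are collinear. -/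
/-- The area of the triangle with vertices `x₁, x₂, x₃ ∈ ℝ²`:
`A = (1/2)|det(x₂ − x₁, x₃ − x₁)|`. -/
noncomputable def triangleArea (x₁ x₂ x₃ : EuclideanSpace ℝ (Fin 2)) : ℝ :=
    (1 / 2) * |(x₂ - x₁) 0 * (x₃ - x₁) 1 - (x₂ - x₁) 1 * (x₃ - x₁) 0|

/-- The Menger curvature `c(x₁,x₂,x₃) = 4A / (|x₁−x₂||x₁−x₃||x₂−x₃|)`. -/
noncomputable def menger (x₁ x₂ x₃ : EuclideanSpace ℝ (Fin 2)) : ℝ :=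
    4 * triangleArea x₁ x₂ x₃ / (‖x₁ - x₂‖ * ‖x₁ - x₃‖ * ‖x₂ - x₃‖)

/-!
Translating `x₁` to the origin, write `a = x₂ - x₁` and `b = x₃ - x₁`. For each coordinate `i`,
`p_i` is a rational function of `a` and `b` which, after clearing denominators, equals
`det(a, b)² / (|a|² |b|² |a - b|²)`. Since `4A = 2 |det(a, b)|`, this is `c² / 4`; and
`det(a, b) = 0` exactly when `b` is a multiple of `a ≠ 0`, i.e. when the points are collinear.
-/

def planeDet (u v : EuclideanSpace ℝ (Fin 2)) : ℝ := u 0 * v 1 - u 1 * v 0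

theorem rieszSym_sub_const {n : ℕ} (i : Fin n) (x₁ x₂ x₃ y : EuclideanSpace ℝ (Fin n)) :
    rieszSym i (x₁ - y) (x₂ - y) (x₃ - y) = rieszSym i x₁ x₂ x₃ := by
  simp only [rieszSym, sub_sub_sub_cancel_right]

theorem norm_sq_eq_fin_two (u : EuclideanSpace ℝ (Fin 2)) : ‖u‖ ^ 2 = u 0 ^ 2 + u 1 ^ 2 := by
  simp [EuclideanSpace.real_norm_sq_eq, Fin.sum_univ_two]

theorem rieszSym_zero_eq_planeDet_sq_div (i : Fin 2) {a b : EuclideanSpace ℝ (Fin 2)}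
    (ha : a ≠ 0) (hb : b ≠ 0) (hab : a ≠ b) :
    rieszSym i 0 a b = planeDet a b ^ 2 / (‖a‖ * ‖b‖ * ‖a - b‖) ^ 2 := by
  have hna : a 0 ^ 2 + a 1 ^ 2 ≠ 0 := by
    rw [← norm_sq_eq_fin_two]; positivity
  have hnb : b 0 ^ 2 + b 1 ^ 2 ≠ 0 := by
    rw [← norm_sq_eq_fin_two]; positivity
  have hnab : (a 0 - b 0) ^ 2 + (a 1 - b 1) ^ 2 ≠ 0 := by
    rw [← PiLp.sub_apply, ← PiLp.sub_apply, ← norm_sq_eq_fin_two]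
    exact pow_ne_zero 2 (norm_ne_zero_iff.mpr (sub_ne_zero.mpr hab))
  simp only [rieszSym, planeDet, sub_zero, zero_sub, norm_neg, ← norm_sub_rev a b, mul_pow,
    norm_sq_eq_fin_two, PiLp.sub_apply, PiLp.neg_apply]
  fin_cases i <;> simp only [Fin.zero_eta, Fin.mk_one] <;> field_simp <;> ring

theorem rieszSym_eq_planeDet_sq_div (i : Fin 2) {x₁ x₂ x₃ : EuclideanSpace ℝ (Fin 2)}
    (h₁₂ : x₁ ≠ x₂) (h₁₃ : x₁ ≠ x₃) (h₂₃ : x₂ ≠ x₃) :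
    rieszSym i x₁ x₂ x₃ =
      planeDet (x₂ - x₁) (x₃ - x₁) ^ 2 / (‖x₁ - x₂‖ * ‖x₁ - x₃‖ * ‖x₂ - x₃‖) ^ 2 := by
  rw [← rieszSym_sub_const i x₁ x₂ x₃ x₁, sub_self, rieszSym_zero_eq_planeDet_sq_div i
      (sub_ne_zero.mpr h₁₂.symm) (sub_ne_zero.mpr h₁₃.symm) (by simpa using h₂₃),
    sub_sub_sub_cancel_right, norm_sub_rev x₂ x₁, norm_sub_rev x₃ x₁]

theorem quarter_mul_menger_sq (x₁ x₂ x₃ : EuclideanSpace ℝ (Fin 2)) :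
    1 / 4 * menger x₁ x₂ x₃ ^ 2 =
      planeDet (x₂ - x₁) (x₃ - x₁) ^ 2 / (‖x₁ - x₂‖ * ‖x₁ - x₃‖ * ‖x₂ - x₃‖) ^ 2 := by
  rw [menger, triangleArea, ← planeDet, div_pow, mul_pow, mul_pow, sq_abs]
  ring

theorem exists_eq_smul_of_planeDet_eq_zero {u v : EuclideanSpace ℝ (Fin 2)} (hu : u ≠ 0)
    (h : planeDet u v = 0) : ∃ c : ℝ, v = c • u := by
  unfold planeDet at h
  by_cases h0 : u 0 = 0
  · have h1 : u 1 ≠ 0 := fun h1 => hu (by ext i; fin_cases i <;> simp [h0, h1])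
    refine ⟨v 1 / u 1, ?_⟩
    ext i; fin_cases i
    · simp only [PiLp.smul_apply, smul_eq_mul]
      have hv0 : v 0 = 0 := by simpa [h0, h1] using h
      simp [hv0, h0]
    · simp [h1]
  · refine ⟨v 0 / u 0, ?_⟩
    ext i; fin_cases i
    · simp [h0]
    · simp only [Fin.mk_one, PiLp.smul_apply, smul_eq_mul]
      field_simp
      linear_combination h

theorem collinear_iff_planeDet_eq_zero {x₁ x₂ x₃ : EuclideanSpace ℝ (Fin 2)} (h₁₂ : x₁ ≠ x₂) :
    Collinear ℝ {x₁, x₂, x₃} ↔ planeDet (x₂ - x₁) (x₃ - x₁) = 0 := by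
  rw [collinear_iff_of_mem (Set.mem_insert x₁ _)]
  constructor
  · rintro ⟨v, hv⟩
    obtain ⟨r₂, rfl⟩ := hv x₂ (by simp)
    obtain ⟨r₃, rfl⟩ := hv x₃ (by simp)
    simp only [vadd_eq_add, add_sub_cancel_right, planeDet, PiLp.smul_apply, smul_eq_mul]
    ring
  · intro h
    obtain ⟨c, hc⟩ := exists_eq_smul_of_planeDet_eq_zero (sub_ne_zero.mpr h₁₂.symm) h
    refine ⟨x₂ - x₁, ?_⟩
    simp only [Set.mem_insert_iff, Set.mem_singleton_iff, vadd_eq_add]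
    rintro p (rfl | rfl | rfl)
    · exact ⟨0, by simp⟩
    · exact ⟨1, by simp⟩
    · exact ⟨c, by rw [← hc, sub_add_cancel]⟩

/-- In the plane, `p₁ = p₂ = (1/4) c(x₁,x₂,x₃)²`; in particular both are non-negative and
vanish exactly when `x₁, x₂, x₃` are collinear. -/
theorem rieszSym_eq_quarter_menger_sq (x₁ x₂ x₃ : EuclideanSpace ℝ (Fin 2))
    (h₁₂ : x₁ ≠ x₂) (h₁₃ : x₁ ≠ x₃) (h₂₃ : x₂ ≠ x₃) :
    rieszSym 0 x₁ x₂ x₃ = rieszSym 1 x₁ x₂ x₃ ∧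
    rieszSym 0 x₁ x₂ x₃ = (1 / 4) * menger x₁ x₂ x₃ ^ 2 ∧
    0 ≤ rieszSym 0 x₁ x₂ x₃ ∧
    (rieszSym 0 x₁ x₂ x₃ = 0 ↔
      Collinear ℝ ({x₁, x₂, x₃} : Set (EuclideanSpace ℝ (Fin 2)))) := by
  have hp (i : Fin 2) := rieszSym_eq_planeDet_sq_div i h₁₂ h₁₃ h₂₃
  have hP : (‖x₁ - x₂‖ * ‖x₁ - x₃‖ * ‖x₂ - x₃‖) ^ 2 ≠ 0 := by
    simp [sub_eq_zero, h₁₂, h₁₃, h₂₃]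
  refine ⟨(hp 0).trans (hp 1).symm, (hp 0).trans (quarter_mul_menger_sq x₁ x₂ x₃).symm,
    by rw [hp 0]; positivity, ?_⟩
  rw [hp 0, div_eq_zero_iff, or_iff_left hP, pow_eq_zero_iff two_ne_zero,
    collinear_iff_planeDet_eq_zero h₁₂]
end

section
/- For every n ≥ 2, every coordinate index i with 1 ≤ i ≤ n, and every triple of pairwise distinct points x₁, x₂, x₃ ∈ ℝⁿ, one has p_i(x₁,x₂,x₃) ≤ Σ_{j ≠ i} p_j(x₁,x₂,x₃), where the sum runs over j ∈ {1,…,n} with j ≠ i. -/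
/-!
With `a = x₂ - x₁` and `b = x₃ - x₁`, clearing denominators shows
`p_j = ‖a_j b - b_j a‖² / (‖a‖² ‖b‖² ‖b - a‖²)`. The numerator is `∑ₖ m_{jk}²` for the
antisymmetric matrix of minors `m_{jk} = a_j b_k - b_j a_k`, so every term `m_{ik}² = m_{ki}²`
(`k ≠ i`) of the `i`-th numerator already occurs in the `k`-th one.
-/

open Finset
open scoped RealInnerProductSpace

theorem norm_smul_sub_smul_sq_real {E : Type*} [NormedAddCommGroup E] [InnerProductSpace ℝ E]
    (u v : ℝ) (a b : E) :
    ‖u • b - v • a‖ ^ 2 = u ^ 2 * ‖b‖ ^ 2 - 2 * u * v * ⟪a, b⟫ + v ^ 2 * ‖a‖ ^ 2 := by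
  rw [norm_sub_sq_real, norm_smul, norm_smul, inner_smul_left, inner_smul_right, real_inner_comm]
  simp only [Real.norm_eq_abs, mul_pow, sq_abs, conj_trivial]
  ring

theorem EuclideanSpace.norm_smul_sub_smul_sq_le_sum_erase {ι : Type*} [Fintype ι] [DecidableEq ι]
    (a b : EuclideanSpace ℝ ι) (i : ι) :
    ‖a i • b - b i • a‖ ^ 2 ≤ ∑ k ∈ univ.erase i, ‖a k • b - b k • a‖ ^ 2 := by
  have minor_antisymm (j k : ι) : (a j • b - b j • a) k = -(a k • b - b k • a) j := by
    simp only [PiLp.sub_apply, PiLp.smul_apply, smul_eq_mul]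
    ring
  calc ‖a i • b - b i • a‖ ^ 2 = ∑ k ∈ univ.erase i, (a i • b - b i • a) k ^ 2 := by
        rw [real_norm_sq_eq, sum_erase]
        simp [mul_comm]
    _ ≤ ∑ k ∈ univ.erase i, ‖a k • b - b k • a‖ ^ 2 := by
        refine sum_le_sum fun k _ => ?_
        rw [minor_antisymm, neg_sq, real_norm_sq_eq]
        exact single_le_sum (fun j _ => sq_nonneg _) (mem_univ i)

theorem rieszSym_eq {n : ℕ} (j : Fin n) {x₁ x₂ x₃ : EuclideanSpace ℝ (Fin n)}
    (h₁₂ : x₁ ≠ x₂) (h₁₃ : x₁ ≠ x₃) (h₂₃ : x₂ ≠ x₃) :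
    rieszSym j x₁ x₂ x₃ =
      ‖(x₂ - x₁) j • (x₃ - x₁) - (x₃ - x₁) j • (x₂ - x₁)‖ ^ 2 /
        (‖x₂ - x₁‖ ^ 2 * ‖x₃ - x₁‖ ^ 2 * ‖x₃ - x₂‖ ^ 2) := by
  have ha : ‖x₂ - x₁‖ ≠ 0 := norm_ne_zero_iff.2 (sub_ne_zero.2 h₁₂.symm)
  have hb : ‖x₃ - x₁‖ ≠ 0 := norm_ne_zero_iff.2 (sub_ne_zero.2 h₁₃.symm)
  have h32 : x₃ - x₂ = (x₃ - x₁) - (x₂ - x₁) := by abel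
  have hba : ‖(x₃ - x₁) - (x₂ - x₁)‖ ≠ 0 := h32 ▸ norm_ne_zero_iff.2 (sub_ne_zero.2 h₂₃.symm)
  have h12 : x₁ - x₂ = -(x₂ - x₁) := by abel
  have h13 : x₁ - x₃ = -(x₃ - x₁) := by abel
  have h23 : x₂ - x₃ = -((x₃ - x₁) - (x₂ - x₁)) := by abel
  rw [rieszSym, h32, h12, h13, h23]
  generalize x₂ - x₁ = a at *
  generalize x₃ - x₁ = b at *
  rw [norm_smul_sub_smul_sq_real, real_inner_comm]
  simp only [norm_neg, PiLp.neg_apply, PiLp.sub_apply]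
  field_simp
  rw [norm_sub_sq_real]
  ring

theorem rieszSym_le_sum_rieszSym_general (n : ℕ) (i : Fin n)
    (x₁ x₂ x₃ : EuclideanSpace ℝ (Fin n))
    (h₁₂ : x₁ ≠ x₂) (h₁₃ : x₁ ≠ x₃) (h₂₃ : x₂ ≠ x₃) :
    rieszSym i x₁ x₂ x₃ ≤
      ∑ j ∈ Finset.univ.filter (fun j => j ≠ i), rieszSym j x₁ x₂ x₃ := by
  simp only [filter_ne', rieszSym_eq _ h₁₂ h₁₃ h₂₃, ← sum_div]
  exact div_le_div_of_nonneg_right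
    (EuclideanSpace.norm_smul_sub_smul_sq_le_sum_erase _ _ i) (by positivity)

/-- For every `n ≥ 2`, every coordinate index `i` and pairwise distinct points
`x₁, x₂, x₃ ∈ ℝⁿ`, one has `p_i(x₁,x₂,x₃) ≤ Σ_{j ≠ i} p_j(x₁,x₂,x₃)`. -/
theorem rieszSym_le_sum_rieszSym (n : ℕ) (hn : 2 ≤ n) (i : Fin n)
    (x₁ x₂ x₃ : EuclideanSpace ℝ (Fin n))
    (h₁₂ : x₁ ≠ x₂) (h₁₃ : x₁ ≠ x₃) (h₂₃ : x₂ ≠ x₃) :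
    rieszSym i x₁ x₂ x₃ ≤
      ∑ j ∈ Finset.univ.filter (fun j => j ≠ i), rieszSym j x₁ x₂ x₃ :=
  rieszSym_le_sum_rieszSym_general n i x₁ x₂ x₃ h₁₂ h₁₃ h₂₃
end

section
/- There exists a constant C > 0 depending only on n with the following property: for every compactly supported finite positive Borel measure μ on ℝⁿ satisfying μ(B(x,r)) ≤ r for all x ∈ ℝⁿ and r > 0, for every index i with 1 ≤ i ≤ n and every ε > 0, one has |∫ |R^i_ε(μ)(x)|² dμ(x) − (1/3)·p_{i,ε}(μ)| ≤ C·μ(ℝⁿ). -/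
open MeasureTheory

/-- The truncated `i`-th scalar Riesz transform of the measure `μ`:
`R^i_ε(μ)(x) = ∫_{|y−x|>ε} (x_i−y_i)/|x−y|² dμ(y)`. -/
noncomputable def truncRiesz {n : ℕ} (i : Fin n) (ε : ℝ)
    (μ : Measure (EuclideanSpace ℝ (Fin n))) (x : EuclideanSpace ℝ (Fin n)) : ℝ :=
    ∫ y in {y | ε < ‖x - y‖}, (x - y) i / ‖x - y‖ ^ 2 ∂μ

/-- The truncated triple symmetrization integral
`p_{i,ε}(μ) = ∭_{S_ε} p_i(x,y,z) dμ(x)dμ(y)dμ(z)`. -/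
noncomputable def truncSym {n : ℕ} (i : Fin n) (ε : ℝ)
    (μ : Measure (EuclideanSpace ℝ (Fin n))) : ℝ :=
    ∫ x, ∫ y, ∫ z,
      (if ε < ‖x - y‖ ∧ ε < ‖x - z‖ ∧ ε < ‖y - z‖ then rieszSym i x y z else 0)
      ∂μ ∂μ ∂μ

/-!
Write `R^i_ε μ(x) = ∫ K(x - y) dμ(y)` with the truncated kernel `K(v) = 1_{‖v‖>ε} vᵢ / ‖v‖²`.
Then `∫ (R^i_ε μ)² dμ` is the integral of `K(x - y) K(x - z)` against `μ ⊗ μ ⊗ μ`. Where moreover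
`‖y - z‖ > ε`, this integrand is the summand of `p_i(x, y, z)` at the vertex `x`, restricted to
`S_ε`; since `μ ⊗ μ ⊗ μ` is invariant under permutations of the coordinates, the three summands of
`p_i` contribute equally, so this part is exactly `p_{i,ε}(μ) / 3`. Where `‖y - z‖ ≤ ε`, AM-GM
bounds `|K(x - y) K(x - z)|` by `(K(x - y)² + K(x - z)²) / 2`, and the swap `y ↔ z` shows that
both halves have the same integral. Integrating `K(x - y)² 1_{‖y - z‖ ≤ ε}` first in `z` costs a
factor `μ(B(y, ε)) ≤ ε`, while `∫ K(x - y)² dμ(y) ≤ 4 / ε` by summing the growth bound over the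
dyadic shells `2ᵏ ε ≤ ‖x - y‖ < 2ᵏ⁺¹ ε`. Hence `C = 4` works.
-/

open Metric
open scoped ENNReal

theorem integrable_of_abs_le {X : Type*} [MeasurableSpace X] {ν : Measure X} [IsFiniteMeasure ν]
    {f : X → ℝ} (hf : Measurable f) (C : ℝ) (hC : ∀ x, |f x| ≤ C) : Integrable f ν :=
  .of_bound hf.aestronglyMeasurable C (ae_of_all _ hC)

section TripleProduct

variable {α β γ E : Type*} [MeasurableSpace α] [MeasurableSpace β] [MeasurableSpace γ]
  [NormedAddCommGroup E] [NormedSpace ℝ E]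
  {μa : Measure α} {μb : Measure β} {μc : Measure γ} [SFinite μa] [SFinite μb] [SFinite μc]

theorem integral_integral_integral_eq_integral_prod {F : α × β × γ → E}
    (hF : Integrable F (μa.prod (μb.prod μc))) :
    ∫ x, ∫ y, ∫ z, F (x, y, z) ∂μc ∂μb ∂μa = ∫ p, F p ∂μa.prod (μb.prod μc) := by
  rw [integral_prod _ hF]
  refine integral_congr_ae ?_
  filter_upwards [hF.prod_right_ae] with x hx
  exact (integral_prod _ hx).symm

theorem integral_prod_comp_swap_right (F : α × γ × β → E) :
    ∫ p, F (p.1, p.2.2, p.2.1) ∂μa.prod (μb.prod μc) = ∫ p, F p ∂μa.prod (μc.prod μb) :=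
  ((MeasurePreserving.id μa).prod Measure.measurePreserving_swap).integral_comp
    ((MeasurableEquiv.refl α).prodCongr MeasurableEquiv.prodComm).measurableEmbedding F

theorem integral_prod_comp_swap_left (F : β × α × γ → E) :
    ∫ p, F (p.2.1, p.1, p.2.2) ∂μa.prod (μb.prod μc) = ∫ p, F p ∂μb.prod (μa.prod μc) :=
  (((measurePreserving_prodAssoc μb μa μc).comp
    (Measure.measurePreserving_swap.prod (MeasurePreserving.id μc))).comp
    (measurePreserving_prodAssoc μa μb μc).symm).integral_comp
    (MeasurableEquiv.prodAssoc.symm.trans ((MeasurableEquiv.prodComm.prodCongr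
      (MeasurableEquiv.refl γ)).trans MeasurableEquiv.prodAssoc)).measurableEmbedding F

end TripleProduct

theorem lintegral_inv_dist_sq_le {X : Type*} [PseudoMetricSpace X] [MeasurableSpace X]
    {μ : Measure X} {x : X} (hμ : ∀ r > 0, μ (closedBall x r) ≤ ENNReal.ofReal r)
    {ε : ℝ} (hε : 0 < ε) :
    ∫⁻ y in {y | ε ≤ dist y x}, ENNReal.ofReal (dist y x ^ 2)⁻¹ ∂μ ≤ ENNReal.ofReal (4 / ε) := by
  set shell : ℕ → Set X := fun k => {y | 2 ^ k * ε ≤ dist y x ∧ dist y x < 2 ^ (k + 1) * ε}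
  have hcover : {y | ε ≤ dist y x} ⊆ ⋃ k, shell k := fun y hy => by
    obtain ⟨k, hk⟩ := exists_nat_pow_near ((one_le_div hε).2 hy) one_lt_two
    refine Set.mem_iUnion.2 ⟨k, ?_, ?_⟩
    · exact (le_div_iff₀ hε).1 hk.1
    · exact (div_lt_iff₀ hε).1 hk.2
  have hshell (k : ℕ) :
      ∫⁻ y in shell k, ENNReal.ofReal (dist y x ^ 2)⁻¹ ∂μ ≤ ENNReal.ofReal (4 / ε / 2 / 2 ^ k) := by
    have hpos : 0 < 2 ^ k * ε := by positivity
    calc ∫⁻ y in shell k, ENNReal.ofReal (dist y x ^ 2)⁻¹ ∂μ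
        ≤ ∫⁻ _ in shell k, ENNReal.ofReal ((2 ^ k * ε) ^ 2)⁻¹ ∂μ :=
          setLIntegral_mono measurable_const fun y hy =>
            ENNReal.ofReal_le_ofReal (inv_anti₀ (by positivity) (pow_le_pow_left₀ hpos.le hy.1 2))
      _ = ENNReal.ofReal ((2 ^ k * ε) ^ 2)⁻¹ * μ (shell k) := setLIntegral_const _ _
      _ ≤ ENNReal.ofReal ((2 ^ k * ε) ^ 2)⁻¹ * ENNReal.ofReal (2 ^ (k + 1) * ε) := by
          gcongr
          exact (measure_mono fun y hy => mem_closedBall.2 hy.2.le).trans (hμ _ (by positivity))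
      _ = ENNReal.ofReal (4 / ε / 2 / 2 ^ k) := by
          rw [← ENNReal.ofReal_mul (by positivity)]
          congr 1
          field_simp
          ring
  calc ∫⁻ y in {y | ε ≤ dist y x}, ENNReal.ofReal (dist y x ^ 2)⁻¹ ∂μ
      ≤ ∫⁻ y in ⋃ k, shell k, ENNReal.ofReal (dist y x ^ 2)⁻¹ ∂μ := lintegral_mono_set hcover
    _ ≤ ∑' k, ∫⁻ y in shell k, ENNReal.ofReal (dist y x ^ 2)⁻¹ ∂μ := lintegral_iUnion_le _ _
    _ ≤ ∑' k, ENNReal.ofReal (4 / ε / 2 / 2 ^ k) := ENNReal.tsum_le_tsum hshell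
    _ = ENNReal.ofReal (4 / ε) := by
        rw [← ENNReal.ofReal_tsum_of_nonneg (fun k => by positivity)
          (summable_geometric_two' _), tsum_geometric_two']

section Euclidean

variable {n : ℕ} {i : Fin n} {ε : ℝ}

local notation "E" => EuclideanSpace ℝ (Fin n)

noncomputable def truncRieszKernel (i : Fin n) (ε : ℝ) (v : E) : ℝ :=
  if ε < ‖v‖ then v i / ‖v‖ ^ 2 else 0

@[fun_prop]
theorem measurable_truncRieszKernel : Measurable (truncRieszKernel i ε) :=
  Measurable.ite (measurableSet_lt measurable_const measurable_norm) (by fun_prop) measurable_const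

theorem truncRiesz_eq_integral_truncRieszKernel (μ : Measure E) (x : E) :
    truncRiesz i ε μ x = ∫ y, truncRieszKernel i ε (x - y) ∂μ := by
  rw [truncRiesz, ← integral_indicator (measurableSet_lt measurable_const (by fun_prop))]
  rfl

theorem truncRieszKernel_neg (v : E) : truncRieszKernel i ε (-v) = -truncRieszKernel i ε v := by
  simp only [truncRieszKernel, norm_neg, PiLp.neg_apply]
  split_ifs <;> ring

theorem truncRieszKernel_of_norm_le {v : E} (hv : ‖v‖ ≤ ε) : truncRieszKernel i ε v = 0 :=
  if_neg hv.not_gt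

theorem abs_apply_div_norm_sq_le (v : E) : |v i / ‖v‖ ^ 2| ≤ ‖v‖⁻¹ := by
  rcases (norm_nonneg v).eq_or_lt with hv | hv
  · simp [← hv]
  calc |v i / ‖v‖ ^ 2| = |v i| / ‖v‖ ^ 2 := by rw [abs_div, abs_pow, abs_norm]
    _ ≤ ‖v‖ / ‖v‖ ^ 2 := by gcongr; simpa using PiLp.norm_apply_le v i
    _ = ‖v‖⁻¹ := by field_simp

theorem abs_truncRieszKernel_le (hε : 0 < ε) (v : E) : |truncRieszKernel i ε v| ≤ ε⁻¹ := by
  unfold truncRieszKernel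
  split_ifs with h
  · exact (abs_apply_div_norm_sq_le v).trans (inv_anti₀ hε h.le)
  · simp [hε.le]

theorem truncRieszKernel_sq_le (v : E) : truncRieszKernel i ε v ^ 2 ≤ (‖v‖ ^ 2)⁻¹ := by
  unfold truncRieszKernel
  split_ifs
  · rw [← sq_abs, ← inv_pow]
    exact pow_le_pow_left₀ (abs_nonneg _) (abs_apply_div_norm_sq_le v) 2
  · simp

theorem abs_truncRieszKernel_mul_le (hε : 0 < ε) (v w : E) :
    |truncRieszKernel i ε v * truncRieszKernel i ε w| ≤ ε⁻¹ * ε⁻¹ := by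
  rw [abs_mul]
  exact mul_le_mul (abs_truncRieszKernel_le hε v) (abs_truncRieszKernel_le hε w) (abs_nonneg _)
    (inv_nonneg.2 hε.le)

theorem integral_truncRieszKernel_sq_le {μ : Measure E} {x : E}
    (hμ : ∀ r > 0, μ (closedBall x r) ≤ ENNReal.ofReal r) (hε : 0 < ε) :
    ∫ y, truncRieszKernel i ε (x - y) ^ 2 ∂μ ≤ 4 / ε := by
  have hs : MeasurableSet {y : E | ε ≤ dist y x} := measurableSet_le measurable_const (by fun_prop)
  rw [integral_eq_lintegral_of_nonneg_ae (ae_of_all _ fun y => sq_nonneg _)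
    (by fun_prop : Measurable fun y => truncRieszKernel i ε (x - y) ^ 2).aestronglyMeasurable]
  refine ENNReal.toReal_le_of_le_ofReal (by positivity) ?_
  calc ∫⁻ y, ENNReal.ofReal (truncRieszKernel i ε (x - y) ^ 2) ∂μ
      ≤ ∫⁻ y, {y | ε ≤ dist y x}.indicator (fun y => ENNReal.ofReal (dist y x ^ 2)⁻¹) y ∂μ := by
        refine lintegral_mono fun y => ?_
        by_cases h : ε ≤ dist y x
        · rw [Set.indicator_of_mem (show y ∈ {y | ε ≤ dist y x} from h), dist_eq_norm,
            norm_sub_rev]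
          exact ENNReal.ofReal_le_ofReal (truncRieszKernel_sq_le _)
        · rw [truncRieszKernel_of_norm_le
            (by rw [← dist_eq_norm, dist_comm]; exact (not_le.1 h).le)]
          simp
    _ = ∫⁻ y in {y | ε ≤ dist y x}, ENNReal.ofReal (dist y x ^ 2)⁻¹ ∂μ := lintegral_indicator hs _
    _ ≤ ENNReal.ofReal (4 / ε) := lintegral_inv_dist_sq_le hμ hε

/-- The summand of `p_i(x, y, z)` at the vertex `x`, cut off to `S_ε`: the kernel factors already
vanish unless `‖x - y‖, ‖x - z‖ > ε`. -/
noncomputable def rieszVertexTerm (i : Fin n) (ε : ℝ) (x y z : E) : ℝ :=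
  if ε < ‖y - z‖ then truncRieszKernel i ε (x - y) * truncRieszKernel i ε (x - z) else 0

theorem measurable_rieszVertexTerm :
    Measurable fun p : E × E × E => rieszVertexTerm i ε p.1 p.2.1 p.2.2 :=
  Measurable.ite (measurableSet_lt measurable_const (by fun_prop)) (by fun_prop) measurable_const

theorem abs_rieszVertexTerm_le (hε : 0 < ε) (x y z : E) :
    |rieszVertexTerm i ε x y z| ≤ ε⁻¹ * ε⁻¹ := by
  unfold rieszVertexTerm
  split_ifs
  · exact abs_truncRieszKernel_mul_le hε _ _
  · rw [abs_zero]
    positivity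

theorem ite_rieszSym_eq (x y z : E) :
    (if ε < ‖x - y‖ ∧ ε < ‖x - z‖ ∧ ε < ‖y - z‖ then rieszSym i x y z else 0) =
      rieszVertexTerm i ε x y z + rieszVertexTerm i ε y x z + rieszVertexTerm i ε z x y := by
  have hk (a b : E) : truncRieszKernel i ε (b - a) = -truncRieszKernel i ε (a - b) := by
    rw [← truncRieszKernel_neg, neg_sub]
  simp only [rieszVertexTerm, hk x y, hk x z, hk y z]
  by_cases hxy : ε < ‖x - y‖ <;> by_cases hxz : ε < ‖x - z‖ <;> by_cases hyz : ε < ‖y - z‖ <;>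
    simp [rieszSym, truncRieszKernel, hxy, hxz, hyz, norm_sub_rev y x, norm_sub_rev z x,
      norm_sub_rev z y]
  ring

noncomputable def rieszNearDiagTerm (i : Fin n) (ε : ℝ) (x y z : E) : ℝ :=
  (closedBall y ε).indicator (fun _ => truncRieszKernel i ε (x - y) ^ 2) z

theorem measurable_rieszNearDiagTerm :
    Measurable fun p : E × E × E => rieszNearDiagTerm i ε p.1 p.2.1 p.2.2 :=
  show Measurable ({p : E × E × E | dist p.2.2 p.2.1 ≤ ε}.indicator
      fun p => truncRieszKernel i ε (p.1 - p.2.1) ^ 2) from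
    (by fun_prop : Measurable _).indicator (measurableSet_le (by fun_prop) measurable_const)

theorem abs_rieszNearDiagTerm_le (hε : 0 < ε) (x y z : E) :
    |rieszNearDiagTerm i ε x y z| ≤ ε⁻¹ * ε⁻¹ := by
  unfold rieszNearDiagTerm
  by_cases hz : z ∈ closedBall y ε
  · rw [Set.indicator_of_mem hz]
    simpa [pow_two] using abs_truncRieszKernel_mul_le (i := i) hε (x - y) (x - y)
  · rw [Set.indicator_of_notMem hz, abs_zero]
    positivity

theorem abs_truncRieszKernel_mul_sub_rieszVertexTerm_le (x y z : E) :
    |truncRieszKernel i ε (x - y) * truncRieszKernel i ε (x - z) - rieszVertexTerm i ε x y z| ≤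
      (rieszNearDiagTerm i ε x y z + rieszNearDiagTerm i ε x z y) / 2 := by
  unfold rieszVertexTerm rieszNearDiagTerm
  split_ifs with h
  · have hz : z ∉ closedBall y ε := by simpa [dist_eq_norm, norm_sub_rev] using h
    have hy : y ∉ closedBall z ε := by simpa [dist_eq_norm] using h
    simp [hy, hz]
  · have hz : z ∈ closedBall y ε := by simpa [dist_eq_norm, norm_sub_rev] using h
    have hy : y ∈ closedBall z ε := by simpa [dist_eq_norm] using h
    rw [Set.indicator_of_mem hz, Set.indicator_of_mem hy, sub_zero, abs_mul]
    nlinarith [two_mul_le_add_sq |truncRieszKernel i ε (x - y)| |truncRieszKernel i ε (x - z)|,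
      sq_abs (truncRieszKernel i ε (x - y)), sq_abs (truncRieszKernel i ε (x - z))]

variable {μ : Measure (EuclideanSpace ℝ (Fin n))} [IsFiniteMeasure μ]

theorem integral_truncRiesz_sq_eq_integral_prod (hε : 0 < ε) :
    ∫ x, truncRiesz i ε μ x ^ 2 ∂μ = ∫ p, truncRieszKernel i ε (p.1 - p.2.1) *
      truncRieszKernel i ε (p.1 - p.2.2) ∂μ.prod (μ.prod μ) := by
  rw [← integral_integral_integral_eq_integral_prod
    (integrable_of_abs_le (by fun_prop) _ fun p => abs_truncRieszKernel_mul_le hε _ _)]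
  refine integral_congr_ae (ae_of_all _ fun x => ?_)
  dsimp only
  rw [truncRiesz_eq_integral_truncRieszKernel, pow_two, ← integral_mul_const]
  simp only [← integral_const_mul]

theorem truncSym_eq_three_mul_integral_prod (hε : 0 < ε) :
    truncSym i ε μ = 3 * ∫ p, rieszVertexTerm i ε p.1 p.2.1 p.2.2 ∂μ.prod (μ.prod μ) := by
  have hV : Integrable (fun p : E × E × E => rieszVertexTerm i ε p.1 p.2.1 p.2.2)
      (μ.prod (μ.prod μ)) :=
    integrable_of_abs_le measurable_rieszVertexTerm _ fun _ => abs_rieszVertexTerm_le hε _ _ _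
  have hV₁₂ : Integrable (fun p : E × E × E => rieszVertexTerm i ε p.2.1 p.1 p.2.2)
      (μ.prod (μ.prod μ)) :=
    integrable_of_abs_le (measurable_rieszVertexTerm.comp
      (f := fun p : E × E × E => (p.2.1, p.1, p.2.2)) (by fun_prop)) _
      fun _ => abs_rieszVertexTerm_le hε _ _ _
  have hV₃₁₂ : Integrable (fun p : E × E × E => rieszVertexTerm i ε p.2.2 p.1 p.2.1)
      (μ.prod (μ.prod μ)) :=
    integrable_of_abs_le (measurable_rieszVertexTerm.comp
      (f := fun p : E × E × E => (p.2.2, p.1, p.2.1)) (by fun_prop)) _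
      fun _ => abs_rieszVertexTerm_le hε _ _ _
  calc truncSym i ε μ
      = ∫ p : E × E × E, (rieszVertexTerm i ε p.1 p.2.1 p.2.2 +
          rieszVertexTerm i ε p.2.1 p.1 p.2.2 + rieszVertexTerm i ε p.2.2 p.1 p.2.1)
          ∂μ.prod (μ.prod μ) := by
        simp only [truncSym, ite_rieszSym_eq]
        exact integral_integral_integral_eq_integral_prod ((hV.add hV₁₂).add hV₃₁₂)
    _ = 3 * ∫ p, rieszVertexTerm i ε p.1 p.2.1 p.2.2 ∂μ.prod (μ.prod μ) := by
        rw [integral_add (f := fun p : E × E × E => rieszVertexTerm i ε p.1 p.2.1 p.2.2 +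
            rieszVertexTerm i ε p.2.1 p.1 p.2.2) (hV.add hV₁₂) hV₃₁₂, integral_add hV hV₁₂,
          integral_prod_comp_swap_left (fun p : E × E × E => rieszVertexTerm i ε p.1 p.2.1 p.2.2),
          integral_prod_comp_swap_right (fun p : E × E × E => rieszVertexTerm i ε p.2.1 p.1 p.2.2),
          integral_prod_comp_swap_left (fun p : E × E × E => rieszVertexTerm i ε p.1 p.2.1 p.2.2)]
        ring

theorem integral_rieszNearDiagTerm_le
    (hμ : ∀ x, ∀ r > 0, μ (closedBall x r) ≤ ENNReal.ofReal r) (hε : 0 < ε) :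
    ∫ p, rieszNearDiagTerm i ε p.1 p.2.1 p.2.2 ∂μ.prod (μ.prod μ) ≤ 4 * μ.real Set.univ := by
  have hinner (x : E) : ∫ y, ∫ z, rieszNearDiagTerm i ε x y z ∂μ ∂μ ≤ 4 :=
    calc ∫ y, ∫ z, rieszNearDiagTerm i ε x y z ∂μ ∂μ
        = ∫ y, μ.real (closedBall y ε) * truncRieszKernel i ε (x - y) ^ 2 ∂μ := by
          simp only [rieszNearDiagTerm, integral_indicator_const _ measurableSet_closedBall,
            smul_eq_mul]
      _ ≤ ∫ y, ε * truncRieszKernel i ε (x - y) ^ 2 ∂μ := by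
          refine integral_mono_of_nonneg (ae_of_all _ fun y => by positivity) ?_
            (ae_of_all _ fun y => ?_)
          · refine (integrable_of_abs_le (by fun_prop) (ε⁻¹ * ε⁻¹) fun y => ?_).const_mul ε
            simpa [pow_two] using abs_truncRieszKernel_mul_le (i := i) hε (x - y) (x - y)
          · exact mul_le_mul_of_nonneg_right
              (ENNReal.toReal_le_of_le_ofReal hε.le (hμ y ε hε)) (sq_nonneg _)
      _ = ε * ∫ y, truncRieszKernel i ε (x - y) ^ 2 ∂μ := integral_const_mul _ _
      _ ≤ ε * (4 / ε) := by gcongr; exact integral_truncRieszKernel_sq_le (hμ x) hε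
      _ = 4 := by field_simp
  rw [← integral_integral_integral_eq_integral_prod
    (integrable_of_abs_le measurable_rieszNearDiagTerm _
      fun _ => abs_rieszNearDiagTerm_le hε _ _ _)]
  calc ∫ x, ∫ y, ∫ z, rieszNearDiagTerm i ε x y z ∂μ ∂μ ∂μ ≤ ∫ _, (4 : ℝ) ∂μ :=
        integral_mono_of_nonneg (ae_of_all _ fun x => integral_nonneg fun y =>
          integral_nonneg fun z => Set.indicator_nonneg (fun _ _ => sq_nonneg _) z)
          (integrable_const 4) (ae_of_all _ hinner)
    _ = 4 * μ.real Set.univ := by rw [integral_const, smul_eq_mul, mul_comm]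

theorem abs_integral_truncRieszKernel_mul_sub_integral_rieszVertexTerm_le
    (hμ : ∀ x, ∀ r > 0, μ (closedBall x r) ≤ ENNReal.ofReal r) (hε : 0 < ε) :
    |∫ p, truncRieszKernel i ε (p.1 - p.2.1) * truncRieszKernel i ε (p.1 - p.2.2)
        ∂μ.prod (μ.prod μ) - ∫ p, rieszVertexTerm i ε p.1 p.2.1 p.2.2 ∂μ.prod (μ.prod μ)| ≤
      4 * μ.real Set.univ := by
  have hN : Integrable (fun p : E × E × E => rieszNearDiagTerm i ε p.1 p.2.1 p.2.2)
      (μ.prod (μ.prod μ)) :=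
    integrable_of_abs_le measurable_rieszNearDiagTerm _ fun _ => abs_rieszNearDiagTerm_le hε _ _ _
  have hN₁₃₂ : Integrable (fun p : E × E × E => rieszNearDiagTerm i ε p.1 p.2.2 p.2.1)
      (μ.prod (μ.prod μ)) :=
    integrable_of_abs_le (measurable_rieszNearDiagTerm.comp
      (f := fun p : E × E × E => (p.1, p.2.2, p.2.1)) (by fun_prop)) _
      fun _ => abs_rieszNearDiagTerm_le hε _ _ _
  rw [← integral_sub
    (integrable_of_abs_le (by fun_prop) _ fun p => abs_truncRieszKernel_mul_le hε _ _)
    (integrable_of_abs_le measurable_rieszVertexTerm _ fun _ => abs_rieszVertexTerm_le hε _ _ _),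
    ← Real.norm_eq_abs]
  calc _ ≤ ∫ p, (rieszNearDiagTerm i ε p.1 p.2.1 p.2.2 + rieszNearDiagTerm i ε p.1 p.2.2 p.2.1) / 2
        ∂μ.prod (μ.prod μ) :=
        norm_integral_le_of_norm_le ((hN.add hN₁₃₂).div_const 2)
          (ae_of_all _ fun p => abs_truncRieszKernel_mul_sub_rieszVertexTerm_le _ _ _)
    _ = ∫ p, rieszNearDiagTerm i ε p.1 p.2.1 p.2.2 ∂μ.prod (μ.prod μ) := by
        rw [integral_div, integral_add hN hN₁₃₂, integral_prod_comp_swap_right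
          (fun p : E × E × E => rieszNearDiagTerm i ε p.1 p.2.1 p.2.2)]
        ring
    _ ≤ 4 * μ.real Set.univ := integral_rieszNearDiagTerm_le hμ hε

end Euclidean

/-- There is `C = C(n) > 0` such that for every compactly supported finite positive Borel
measure `μ` on `ℝⁿ` with `μ(B(x,r)) ≤ r` for all `x` and `r > 0`, every coordinate `i`
and every `ε > 0`, `|∫ |R^i_ε(μ)|² dμ − (1/3) p_{i,ε}(μ)| ≤ C μ(ℝⁿ)`. -/
theorem abs_l2_sub_third_truncSym_le (n : ℕ) :
    ∃ C > 0, ∀ μ : Measure (EuclideanSpace ℝ (Fin n)), IsFiniteMeasure μ →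
      (∃ K : Set (EuclideanSpace ℝ (Fin n)), IsCompact K ∧ μ Kᶜ = 0) →
      (∀ (x : EuclideanSpace ℝ (Fin n)) (r : ℝ), 0 < r →
        μ (Metric.closedBall x r) ≤ ENNReal.ofReal r) →
      ∀ i : Fin n, ∀ ε > 0,
        |(∫ x, truncRiesz i ε μ x ^ 2 ∂μ) - (1 / 3) * truncSym i ε μ| ≤
          C * (μ Set.univ).toReal := by
  refine ⟨4, by norm_num, fun μ _ _ hμ i ε hε => ?_⟩
  rw [integral_truncRiesz_sq_eq_integral_prod hε, truncSym_eq_three_mul_integral_prod hε, one_div,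
    inv_mul_cancel_left₀ three_ne_zero]
  exact abs_integral_truncRieszKernel_mul_sub_integral_rieszVertexTerm_le hμ hε
end

section
/- Let 0 < α < 1 and let x₁, x₂, x₃ ∈ ℝⁿ be pairwise distinct. Then for every index i with 1 ≤ i ≤ n, p_{α,i}(x₁,x₂,x₃) = 0 if and only if (x₁)_i = (x₂)_i = (x₃)_i, i.e. if and only if the three points lie on a hyperplane perpendicular to the i-th coordinate axis. In particular p_{α,i}(x₁,x₂,x₃) ≥ 0. -/
/-!
Put `β = (1 + α) / 2` and let `p, q, r` be the `β`-th powers of the side lengths `|x₁ - x₂|`,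
`|x₁ - x₃|`, `|x₂ - x₃|`. Clearing the denominators `p² q² r²` turns `p_{α,i}` into the binary
quadratic form `u² r² + v² p² + u v (p² + r² - q²)` in `u = (x₂ - x₁)_i`, `v = (x₃ - x₂)_i`.
Its discriminant is minus Heron's product `(p + q + r)(p + r - q)(p + q - r)(q + r - p)`, so the
form is positive definite as soon as `p, q, r` satisfy the strict triangle inequalities. They do,
because `t ↦ t ^ β` is strictly subadditive for `0 < β < 1`.
-/

open Real

theorem Real.rpow_add_lt_add_rpow {p a b : ℝ} (ha : 0 < a) (hb : 0 < b) (hp : p < 1) :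
    (a + b) ^ p < a ^ p + b ^ p := by
  have hab : 0 < a + b := add_pos ha hb
  have hsplit : ∀ {x : ℝ}, 0 < x → x ^ p = x * x ^ (p - 1) := fun hx => by
    rw [rpow_sub_one hx.ne', mul_div_cancel₀ _ hx.ne']
  have hdec : ∀ {x : ℝ}, 0 < x → x < a + b → (a + b) ^ (p - 1) < x ^ (p - 1) := fun hx hxab =>
    rpow_lt_rpow_of_neg hx hxab (by linarith)
  rw [hsplit ha, hsplit hb, hsplit hab, add_mul]
  exact add_lt_add (mul_lt_mul_of_pos_left (hdec ha (by linarith)) ha)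
    (mul_lt_mul_of_pos_left (hdec hb (by linarith)) hb)

theorem dist_rpow_lt_add_of_ne {X : Type*} [MetricSpace X] {p : ℝ} (hp₀ : 0 < p) (hp₁ : p < 1)
    {x y z : X} (hxy : x ≠ y) (hyz : y ≠ z) :
    dist x z ^ p < dist x y ^ p + dist y z ^ p :=
  calc dist x z ^ p ≤ (dist x y + dist y z) ^ p :=
        rpow_le_rpow dist_nonneg (dist_triangle x y z) hp₀.le
    _ < dist x y ^ p + dist y z ^ p :=
        rpow_add_lt_add_rpow (dist_pos.2 hxy) (dist_pos.2 hyz) hp₁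

theorem quadForm_pos_of_triangle {P Q R u v : ℝ} (hP : P < Q + R) (hQ : Q < P + R)
    (hR : R < P + Q) (huv : u ≠ 0 ∨ v ≠ 0) :
    0 < u ^ 2 * R ^ 2 + v ^ 2 * P ^ 2 + u * v * (P ^ 2 + R ^ 2 - Q ^ 2) := by
  have hR₀ : 0 < R := by linarith
  have heron : 0 < (P + Q + R) * (P + R - Q) * (P + Q - R) * (Q + R - P) := by
    have : 0 < P + Q + R := by linarith
    have : 0 < P + R - Q := by linarith
    have : 0 < P + Q - R := by linarith
    have : 0 < Q + R - P := by linarith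
    positivity
  have hcomplete : 4 * R ^ 2 * (u ^ 2 * R ^ 2 + v ^ 2 * P ^ 2 + u * v * (P ^ 2 + R ^ 2 - Q ^ 2)) =
      (2 * R ^ 2 * u + (P ^ 2 + R ^ 2 - Q ^ 2) * v) ^ 2 +
        (P + Q + R) * (P + R - Q) * (P + Q - R) * (Q + R - P) * v ^ 2 := by
    ring
  refine pos_of_mul_pos_right (hcomplete ▸ ?_) (by positivity : (0 : ℝ) ≤ 4 * R ^ 2)
  rcases eq_or_ne v 0 with rfl | hv
  · have hu : u ≠ 0 := by simpa using huv
    simp only [mul_zero, add_zero]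
    positivity
  · positivity

section rieszSymA

/-- The α-symmetrization quantity `p_{α,i}(x₁,x₂,x₃)`, built from the scalar kernels
`x_i/|x|^{1+α}`. -/
noncomputable def rieszSymA {n : ℕ} (α : ℝ) (i : Fin n)
    (x₁ x₂ x₃ : EuclideanSpace ℝ (Fin n)) : ℝ :=
    ((x₂ - x₁) i / ‖x₂ - x₁‖ ^ (1 + α)) * ((x₃ - x₁) i / ‖x₃ - x₁‖ ^ (1 + α)) +
    ((x₁ - x₂) i / ‖x₁ - x₂‖ ^ (1 + α)) * ((x₃ - x₂) i / ‖x₃ - x₂‖ ^ (1 + α)) +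
    ((x₁ - x₃) i / ‖x₁ - x₃‖ ^ (1 + α)) * ((x₂ - x₃) i / ‖x₂ - x₃‖ ^ (1 + α))

variable {n : ℕ} (α : ℝ) (i : Fin n) {x₁ x₂ x₃ : EuclideanSpace ℝ (Fin n)}

theorem rieszSymA_eq_zero_of_eq (h₁₂ : x₁ i = x₂ i) (h₂₃ : x₂ i = x₃ i) :
    rieszSymA α i x₁ x₂ x₃ = 0 := by
  simp [rieszSymA, h₁₂, h₂₃]

theorem rieszSymA_eq_div (h₁₂ : x₁ ≠ x₂) (h₁₃ : x₁ ≠ x₃) (h₂₃ : x₂ ≠ x₃) :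
    rieszSymA α i x₁ x₂ x₃ =
      ((x₂ i - x₁ i) ^ 2 * dist x₂ x₃ ^ (1 + α) + (x₃ i - x₂ i) ^ 2 * dist x₁ x₂ ^ (1 + α) +
          (x₂ i - x₁ i) * (x₃ i - x₂ i) *
            (dist x₁ x₂ ^ (1 + α) + dist x₂ x₃ ^ (1 + α) - dist x₁ x₃ ^ (1 + α))) /
        (dist x₁ x₂ ^ (1 + α) * dist x₁ x₃ ^ (1 + α) * dist x₂ x₃ ^ (1 + α)) := by
  have hA : dist x₁ x₂ ^ (1 + α) ≠ 0 := (rpow_pos_of_pos (dist_pos.2 h₁₂) _).ne'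
  have hB : dist x₁ x₃ ^ (1 + α) ≠ 0 := (rpow_pos_of_pos (dist_pos.2 h₁₃) _).ne'
  have hC : dist x₂ x₃ ^ (1 + α) ≠ 0 := (rpow_pos_of_pos (dist_pos.2 h₂₃) _).ne'
  simp only [rieszSymA, PiLp.sub_apply, ← dist_eq_norm, dist_comm x₂ x₁, dist_comm x₃ x₁,
    dist_comm x₃ x₂]
  field_simp
  ring

theorem rieszSymA_pos (hα₀ : 0 < α) (hα₁ : α < 1) (h₁₂ : x₁ ≠ x₂) (h₁₃ : x₁ ≠ x₃)
    (h₂₃ : x₂ ≠ x₃) (hi : x₁ i ≠ x₂ i ∨ x₂ i ≠ x₃ i) : 0 < rieszSymA α i x₁ x₂ x₃ := by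
  have hβ₀ : 0 < (1 + α) / 2 := by linarith
  have hβ₁ : (1 + α) / 2 < 1 := by linarith
  have hsq : ∀ x y : EuclideanSpace ℝ (Fin n),
      dist x y ^ (1 + α) = (dist x y ^ ((1 + α) / 2)) ^ 2 := fun x y => by
    rw [← rpow_mul_natCast dist_nonneg]
    norm_num
  have hdist : ∀ {x y : EuclideanSpace ℝ (Fin n)}, x ≠ y → 0 < dist x y ^ (1 + α) :=
    fun h => rpow_pos_of_pos (dist_pos.2 h) _
  rw [rieszSymA_eq_div α i h₁₂ h₁₃ h₂₃]
  refine div_pos ?_ (mul_pos (mul_pos (hdist h₁₂) (hdist h₁₃)) (hdist h₂₃))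
  rw [hsq x₁ x₂, hsq x₁ x₃, hsq x₂ x₃]
  refine quadForm_pos_of_triangle ?_ (dist_rpow_lt_add_of_ne hβ₀ hβ₁ h₁₂ h₂₃) ?_ ?_
  · simpa only [dist_comm x₃ x₂] using dist_rpow_lt_add_of_ne hβ₀ hβ₁ h₁₃ h₂₃.symm
  · simpa only [dist_comm x₂ x₁, add_comm] using dist_rpow_lt_add_of_ne hβ₀ hβ₁ h₁₂.symm h₁₃
  · simp only [ne_eq, sub_eq_zero]
    exact hi.imp (Ne.symm ·) (Ne.symm ·)

end rieszSymA

/-- For `0 < α < 1` and pairwise distinct `x₁, x₂, x₃ ∈ ℝⁿ`, `p_{α,i}(x₁,x₂,x₃) = 0` iff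
the three points have the same `i`-th coordinate (lie on a hyperplane perpendicular to the
`i`-th axis); in particular `p_{α,i}(x₁,x₂,x₃) ≥ 0`. -/
theorem rieszSymA_eq_zero_iff (n : ℕ) (α : ℝ) (hα₀ : 0 < α) (hα₁ : α < 1)
    (x₁ x₂ x₃ : EuclideanSpace ℝ (Fin n))
    (h₁₂ : x₁ ≠ x₂) (h₁₃ : x₁ ≠ x₃) (h₂₃ : x₂ ≠ x₃) (i : Fin n) :
    (rieszSymA α i x₁ x₂ x₃ = 0 ↔ x₁ i = x₂ i ∧ x₂ i = x₃ i) ∧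
    0 ≤ rieszSymA α i x₁ x₂ x₃ := by
  by_cases hi : x₁ i = x₂ i ∧ x₂ i = x₃ i
  · have h := rieszSymA_eq_zero_of_eq α i hi.1 hi.2
    exact ⟨iff_of_true h hi, h.ge⟩
  · have h := rieszSymA_pos α i hα₀ hα₁ h₁₂ h₁₃ h₂₃ (not_and_or.1 hi)
    exact ⟨iff_of_false h.ne' hi, h.le⟩
end
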